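/- arXiv:2604.06335 — 6 statements merged into one kernel-verified Lean document; each statement's English description precedes it below -/
import Mathlib

section
/- For every prime p there exists a two-variable polynomial q(x,y) over Z_p of total degree at most p such that q is divisible by the monomial xy, and for all integers a, b with 0 ≤ a, b < p, evaluating q at (a mod p, b mod p) gives ⌊(a+b)/p⌋ mod p. -/
open MvPolynomial Finset

lemma prod_sub_cast (R : Type*) [CommRing R] (a k : ℕ) :
    ∏ j ∈ Finset.range k, ((a : R) - (j : R)) = (a.descFactorial k : R) := by
  induction k with
  | zero => simp
  | succ k ih =>
      rw [Finset.prod_range_succ, ih, Nat.descFactorial_succ, Nat.cast_mul]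
      by_cases h : k ≤ a
      · rw [Nat.cast_sub h, mul_comm]
      · push_neg at h
        rw [Nat.descFactorial_eq_zero_iff_lt.mpr h]
        simp

theorem stmt1 (p : ℕ) (hp : p.Prime) :
    ∃ q : MvPolynomial (Fin 2) (ZMod p),
      q.totalDegree ≤ p ∧
      (X 0 * X 1 : MvPolynomial (Fin 2) (ZMod p)) ∣ q ∧
      ∀ a b : ℕ, a < p → b < p →
        eval (fun i : Fin 2 => if i = 0 then (a : ZMod p) else (b : ZMod p)) q
          = ((a + b) / p : ℕ) := by
  haveI : Fact p.Prime := ⟨hp⟩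
  set q : MvPolynomial (Fin 2) (ZMod p) :=
    ∑ i ∈ Finset.Ioo 0 p,
      (((i.factorial : ZMod p)⁻¹ * (((p - i).factorial : ZMod p))⁻¹)) •
        ((∏ j ∈ Finset.range i, (X 0 - C (j : ZMod p))) *
         (∏ j ∈ Finset.range (p - i), (X 1 - C (j : ZMod p)))) with hq
  have hfacne : ∀ k : ℕ, k < p → ((k.factorial : ZMod p) ≠ 0) := by
    intro k hk
    rw [Ne, ZMod.natCast_eq_zero_iff]
    intro hdvd
    exact absurd ((Nat.Prime.dvd_factorial hp).mp hdvd) (by omega)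
  refine ⟨q, ?_, ?_, ?_⟩
  · -- totalDegree
    refine (MvPolynomial.totalDegree_finset_sum _ _).trans ?_
    apply Finset.sup_le
    intro i hi
    simp only [Finset.mem_Ioo] at hi
    refine (MvPolynomial.totalDegree_smul_le _ _).trans ?_
    refine (MvPolynomial.totalDegree_mul _ _).trans ?_
    have h1 : (∏ j ∈ Finset.range i, (X (0 : Fin 2) - C (j : ZMod p))).totalDegree ≤ i := by
      refine (MvPolynomial.totalDegree_finset_prod _ _).trans ?_
      calc _ ≤ ∑ _j ∈ Finset.range i, 1 := Finset.sum_le_sum (fun j _ => ?_)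
        _ = i := by simp
      exact (MvPolynomial.totalDegree_sub_C_le _ _).trans (by simp [MvPolynomial.totalDegree_X])
    have h2 : (∏ j ∈ Finset.range (p - i), (X (1 : Fin 2) - C (j : ZMod p))).totalDegree ≤ p - i := by
      refine (MvPolynomial.totalDegree_finset_prod _ _).trans ?_
      calc _ ≤ ∑ _j ∈ Finset.range (p - i), 1 := Finset.sum_le_sum (fun j _ => ?_)
        _ = p - i := by simp
      exact (MvPolynomial.totalDegree_sub_C_le _ _).trans (by simp [MvPolynomial.totalDegree_X])
    omega
  · -- divisibility
    apply Finset.dvd_sum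
    intro i hi
    simp only [Finset.mem_Ioo] at hi
    rw [smul_eq_C_mul]
    apply Dvd.dvd.mul_left
    apply mul_dvd_mul
    · have h0 : (0 : ℕ) ∈ Finset.range i := Finset.mem_range.mpr hi.1
      have := Finset.dvd_prod_of_mem (fun j => (X (0:Fin 2) - C ((j:ℕ) : ZMod p))) h0
      simpa using this
    · have h0 : (0 : ℕ) ∈ Finset.range (p - i) := Finset.mem_range.mpr (by omega)
      have := Finset.dvd_prod_of_mem (fun j => (X (1:Fin 2) - C ((j:ℕ) : ZMod p))) h0
      simpa using this
  · -- evaluation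
    intro a b ha hb
    rw [hq, map_sum]
    have hterm : ∀ i ∈ Finset.Ioo 0 p,
        eval (fun i : Fin 2 => if i = 0 then (a : ZMod p) else (b : ZMod p))
          ((((i.factorial : ZMod p)⁻¹ * (((p - i).factorial : ZMod p))⁻¹)) •
            ((∏ j ∈ Finset.range i, (X 0 - C (j : ZMod p))) *
             (∏ j ∈ Finset.range (p - i), (X 1 - C (j : ZMod p)))))
          = ((a.choose i * b.choose (p - i) : ℕ) : ZMod p) := by
      intro i hi
      simp only [Finset.mem_Ioo] at hi
      rw [smul_eq_C_mul, eval_mul, eval_C, eval_mul, eval_prod, eval_prod]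
      have h10 : (1 : Fin 2) ≠ 0 := by decide
      simp only [eval_sub, eval_X, eval_C, if_pos rfl, if_neg h10, if_true, eq_self_iff_true]
      rw [prod_sub_cast, prod_sub_cast, Nat.descFactorial_eq_factorial_mul_choose,
        Nat.descFactorial_eq_factorial_mul_choose]
      push_cast
      field_simp [hfacne i hi.2, hfacne (p - i) (by omega)]
    rw [Finset.sum_congr rfl hterm, ← Nat.cast_sum]
    have hsum : ∑ i ∈ Finset.Ioo 0 p, a.choose i * b.choose (p - i) = (a + b).choose p := by
      rw [Nat.add_choose_eq, Finset.Nat.sum_antidiagonal_eq_sum_range_succ_mk]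
      apply Finset.sum_subset
      · intro i hi
        simp only [Finset.mem_Ioo, Finset.mem_range] at hi ⊢
        omega
      · intro i hi hni
        simp only [Finset.mem_Ioo, Finset.mem_range] at hi hni
        have : i = 0 ∨ i = p := by omega
        rcases this with rfl | rfl
        · simp [Nat.choose_eq_zero_of_lt hb]
        · simp [Nat.choose_eq_zero_of_lt ha]
    rw [hsum]
    -- Lucas
    have hl := Choose.choose_modEq_choose_mod_mul_choose_div (n := a + b) (k := p) (p := p)
    have := (ZMod.intCast_eq_intCast_iff _ _ _).mpr hl
    push_cast at this
    rw [this, Nat.mod_self, Nat.div_self hp.pos, Nat.choose_one_right]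
    simp
end

section
/- Let p be prime and N a natural number. For vectors u, v ∈ {0,1,...,p−1}^N, let u +_p v denote coordinatewise addition modulo p (with representatives in {0,...,p−1}), and let w_m(v) denote the sum of coordinates of v taken modulo m. If q(x,y) is a polynomial over Z_p divisible by xy satisfying q(a,b) = ⌊(a+b)/p⌋ for all 0 ≤ a,b < p, then for all u, v: w_{p²}(u +_p v) = w_{p²}(u) + w_{p²}(v) − p·w_p(q applied coordinatewise to (u,v)) in Z_{p²}. -/
open MvPolynomial

theorem stmt3 (p N : ℕ) (hp : p.Prime) (u v : Fin N → ℕ)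
    (hu : ∀ i, u i < p) (hv : ∀ i, v i < p)
    (q : MvPolynomial (Fin 2) (ZMod p))
    (hdvd : (X 0 * X 1 : MvPolynomial (Fin 2) (ZMod p)) ∣ q)
    (hq : ∀ a b : ℕ, a < p → b < p →
      eval (fun i : Fin 2 => if i = 0 then (a : ZMod p) else (b : ZMod p)) q
        = ((a + b) / p : ℕ)) :
    ((∑ i, (u i + v i) % p : ℕ) : ZMod (p ^ 2))
      = ((∑ i, u i : ℕ) : ZMod (p ^ 2)) + ((∑ i, v i : ℕ) : ZMod (p ^ 2))
        - (p : ZMod (p ^ 2)) *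
          (((∑ i, eval (fun j : Fin 2 => if j = 0 then (u i : ZMod p) else (v i : ZMod p)) q
              : ZMod p).val : ZMod (p ^ 2))) := by
  haveI : Fact p.Prime := ⟨hp⟩
  set S : ℕ := ∑ i, (u i + v i) / p with hS
  have key : ∑ i, (u i + v i) % p + p * S = ∑ i, u i + ∑ i, v i := by
    rw [hS, Finset.mul_sum, ← Finset.sum_add_distrib, ← Finset.sum_add_distrib]
    exact Finset.sum_congr rfl fun i _ => Nat.mod_add_div _ _
  have heval : (∑ i, eval (fun j : Fin 2 => if j = 0 then (u i : ZMod p) else (v i : ZMod p)) q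
      : ZMod p) = (S : ZMod p) := by
    rw [hS, Nat.cast_sum]
    exact Finset.sum_congr rfl fun i _ => hq (u i) (v i) (hu i) (hv i)
  rw [heval, ZMod.val_natCast]
  have hp2 : ((p : ZMod (p^2)) * ((S % p : ℕ) : ZMod (p^2))) = (p : ZMod (p^2)) * (S : ZMod (p^2)) := by
    have : p * S = p * (S % p) + p ^ 2 * (S / p) := by
      rw [pow_two, mul_assoc, ← Nat.mul_add, Nat.mod_add_div]
    have h2 := congrArg (fun n : ℕ => (n : ZMod (p^2))) this
    push_cast at h2 ⊢
    rw [h2, show ((p:ZMod (p^2)))^2 = 0 by rw [← Nat.cast_pow]; exact ZMod.natCast_self _]; ring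
  rw [hp2]
  have h3 := congrArg (fun n : ℕ => (n : ZMod (p^2))) key
  push_cast at h3 ⊢
  linear_combination h3
end

section
/- Let p be prime, k ≥ 2, D and E finite sets, and α : D → E. Suppose V ≤ Z_p^N is a subspace, i = (1,...,1) ∈ V, and v : D → V satisfies: (s) Σ_{a∈D} v(a) = i; (o) w(v(a) ⊙ v(b) ⊙ u₁ ⊙ ⋯ ⊙ u_{k−2}) = 0 for all distinct a, b ∈ D and all u₁,...,u_{k−2} ∈ V; (p) w(v(a) ⊙ v(a) ⊙ u₁ ⊙ ⋯ ⊙ u_{k−2}) = w(v(a) ⊙ u₁ ⊙ ⋯ ⊙ u_{k−2}) for all a ∈ D and all u₁,...,u_{k−2} ∈ V. Then the pushforward v_α : E → V defined by v_α(b) = Σ_{a ∈ α⁻¹(b)} v(a) also satisfies conditions (s), (o), (p). -/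
open Finset

section WeightedPairing

variable {R ι D : Type*} [CommSemiring R] [Fintype ι] (v : D → ι → R) (c : ι → R)

theorem sum_finsetSum_mul_finsetSum_mul (s t : Finset D) :
    ∑ n, (∑ a ∈ s, v a) n * (∑ b ∈ t, v b) n * c n
      = ∑ a ∈ s, ∑ b ∈ t, ∑ n, v a n * v b n * c n := by
  have hpoint : ∀ n, (∑ a ∈ s, v a n) * (∑ b ∈ t, v b n) * c n
      = ∑ a ∈ s, ∑ b ∈ t, v a n * v b n * c n := fun n => by
    rw [sum_mul_sum, sum_mul]
    exact sum_congr rfl fun _ _ => sum_mul ..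
  simp only [Finset.sum_apply, hpoint]
  rw [sum_comm]
  exact sum_congr rfl fun _ _ => sum_comm

theorem sum_finsetSum_mul_finsetSum_mul_eq_zero {s t : Finset D}
    (horth : ∀ a ∈ s, ∀ b ∈ t, ∑ n, v a n * v b n * c n = 0) :
    ∑ n, (∑ a ∈ s, v a) n * (∑ b ∈ t, v b) n * c n = 0 := by
  rw [sum_finsetSum_mul_finsetSum_mul]
  exact sum_eq_zero fun a ha => sum_eq_zero fun b hb => horth a ha b hb

theorem sum_finsetSum_mul_self_mul {s : Finset D}
    (horth : ∀ a ∈ s, ∀ b ∈ s, a ≠ b → ∑ n, v a n * v b n * c n = 0)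
    (hidem : ∀ a ∈ s, ∑ n, v a n * v a n * c n = ∑ n, v a n * c n) :
    ∑ n, (∑ a ∈ s, v a) n * (∑ a ∈ s, v a) n * c n = ∑ n, (∑ a ∈ s, v a) n * c n := by
  have hdiag : ∀ a ∈ s, ∑ b ∈ s, ∑ n, v a n * v b n * c n = ∑ n, v a n * c n := fun a ha => by
    rw [sum_eq_single_of_mem a ha fun b hb hba => horth a ha b hb hba.symm]
    exact hidem a ha
  rw [sum_finsetSum_mul_finsetSum_mul, sum_congr rfl hdiag, sum_comm]
  simp only [Finset.sum_apply, sum_mul]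

end WeightedPairing

theorem stmt5_general (p : ℕ) (k : ℕ) (N : ℕ)
    (D E : Type) [Fintype D] [Fintype E] [DecidableEq E] (α : D → E)
    (V : Submodule (ZMod p) (Fin N → ZMod p))
    (v : D → Fin N → ZMod p)
    (hs : ∑ a, v a = fun _ => 1)
    (ho : ∀ a b : D, a ≠ b → ∀ u : Fin (k - 2) → Fin N → ZMod p, (∀ j, u j ∈ V) →
      ∑ n, v a n * v b n * ∏ j, u j n = 0)
    (hpp : ∀ a : D, ∀ u : Fin (k - 2) → Fin N → ZMod p, (∀ j, u j ∈ V) →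
      ∑ n, v a n * v a n * ∏ j, u j n = ∑ n, v a n * ∏ j, u j n) :
    ((∑ b, ∑ a ∈ Finset.univ.filter (fun a => α a = b), v a) = fun _ => 1) ∧
    (∀ b b' : E, b ≠ b' → ∀ u : Fin (k - 2) → Fin N → ZMod p, (∀ j, u j ∈ V) →
      ∑ n, (∑ a ∈ Finset.univ.filter (fun a => α a = b), v a) n *
           (∑ a ∈ Finset.univ.filter (fun a => α a = b'), v a) n * ∏ j, u j n = 0) ∧
    (∀ b : E, ∀ u : Fin (k - 2) → Fin N → ZMod p, (∀ j, u j ∈ V) →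
      ∑ n, (∑ a ∈ Finset.univ.filter (fun a => α a = b), v a) n *
           (∑ a ∈ Finset.univ.filter (fun a => α a = b), v a) n * ∏ j, u j n
        = ∑ n, (∑ a ∈ Finset.univ.filter (fun a => α a = b), v a) n * ∏ j, u j n) := by
  refine ⟨by rw [sum_fiberwise]; exact hs, ?_, ?_⟩
  · intro b b' hbb' u hu
    refine sum_finsetSum_mul_finsetSum_mul_eq_zero v _ fun a ha a' ha' => ho a a' ?_ u hu
    rintro rfl
    exact hbb' ((mem_filter.1 ha).2.symm.trans (mem_filter.1 ha').2)
  · intro b u hu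
    exact sum_finsetSum_mul_self_mul v _ (fun a _ a' _ haa' => ho a a' haa' u hu)
      (fun a _ => hpp a u hu)

theorem stmt5 (p : ℕ) (hp : p.Prime) (k : ℕ) (hk : 2 ≤ k) (N : ℕ)
    (D E : Type) [Fintype D] [Fintype E] [DecidableEq E] (α : D → E)
    (V : Submodule (ZMod p) (Fin N → ZMod p))
    (hi : ((fun _ => 1) : Fin N → ZMod p) ∈ V)
    (v : D → Fin N → ZMod p) (hv : ∀ a, v a ∈ V)
    (hs : ∑ a, v a = fun _ => 1)
    (ho : ∀ a b : D, a ≠ b → ∀ u : Fin (k - 2) → Fin N → ZMod p, (∀ j, u j ∈ V) →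
      ∑ n, v a n * v b n * ∏ j, u j n = 0)
    (hpp : ∀ a : D, ∀ u : Fin (k - 2) → Fin N → ZMod p, (∀ j, u j ∈ V) →
      ∑ n, v a n * v a n * ∏ j, u j n = ∑ n, v a n * ∏ j, u j n) :
    ((∑ b, ∑ a ∈ Finset.univ.filter (fun a => α a = b), v a) = fun _ => 1) ∧
    (∀ b b' : E, b ≠ b' → ∀ u : Fin (k - 2) → Fin N → ZMod p, (∀ j, u j ∈ V) →
      ∑ n, (∑ a ∈ Finset.univ.filter (fun a => α a = b), v a) n *
           (∑ a ∈ Finset.univ.filter (fun a => α a = b'), v a) n * ∏ j, u j n = 0) ∧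
    (∀ b : E, ∀ u : Fin (k - 2) → Fin N → ZMod p, (∀ j, u j ∈ V) →
      ∑ n, (∑ a ∈ Finset.univ.filter (fun a => α a = b), v a) n *
           (∑ a ∈ Finset.univ.filter (fun a => α a = b), v a) n * ∏ j, u j n
        = ∑ n, (∑ a ∈ Finset.univ.filter (fun a => α a = b), v a) n * ∏ j, u j n) :=
  stmt5_general p k N D E α V v hs ho hpp
end

section
/- Let p be a prime, k ≥ 1, W a finite-dimensional vector space over Z_p, and G : W^k → Z_p a k-linear form. Suppose M is a basis of W such that the restriction of G to M^k is totally symmetric (i.e., G(m₁,...,m_k) depends only on the set {m₁,...,m_k}). Then for every sufficiently large N there exists a linear map r : W → Z_p^N such that for all w₁,...,w_k ∈ W, G(w₁,...,w_k) = w(r(w₁) ⊙ r(w₂) ⊙ ⋯ ⊙ r(w_k)), where w denotes the coordinate sum and ⊙ the coordinatewise product. -/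
/-!
On basis tuples `G` depends only on the set `T` of basis vectors used, say `G (B ∘ m) = g T`.
Möbius inversion on the Boolean lattice writes `g T = ∑_{S ⊇ T} c S`, and `[T ⊆ S]` is the
product of the values of `λ_S = ∑_{i ∈ S} coord i` on the vectors of the tuple, so by
multilinearity `G = ∑_S c S • ∏_j λ_S`. Over `ZMod p` the coefficient `c S` is a sum of
`(c S).val` ones, so each term becomes `(c S).val` coordinates of `r`; any further coordinates
are zero, which contributes nothing since `k ≥ 1`.
-/

open Finset

namespace IncidenceAlgebra

theorem exists_sum_Ici_eq {𝕜 α : Type*} [Ring 𝕜] [PartialOrder α] [OrderTop α]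
    [LocallyFiniteOrder α] [DecidableEq α] (g : α → 𝕜) :
    ∃ f : α → 𝕜, ∀ x, ∑ y ∈ Ici x, f y = g x := by
  refine ⟨fun y => ∑ z ∈ Ici y, mu 𝕜 y z * g z, fun x => ?_⟩
  calc ∑ y ∈ Ici x, ∑ z ∈ Ici y, mu 𝕜 y z * g z
      = ∑ z ∈ Ici x, ∑ y ∈ Icc x z, mu 𝕜 y z * g z := by
        refine sum_comm' fun y z => ?_
        simp only [mem_Ici, mem_Icc]
        exact ⟨fun h => ⟨⟨h.1, h.2⟩, h.1.trans h.2⟩, fun h => ⟨h.1.1, h.1.2⟩⟩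
    _ = ∑ z ∈ Ici x, (if x = z then 1 else 0) * g z := by
        simp only [← sum_mul, sum_Icc_mu_left]
    _ = g x := by simp

end IncidenceAlgebra

namespace Module.Basis

variable {R W ι : Type*} [CommRing R] [AddCommGroup W] [Module R W] (B : Basis ι R W)

theorem sum_coord_apply_self [DecidableEq ι] (S : Finset ι) (j : ι) :
    (∑ i ∈ S, B.coord i) (B j) = if j ∈ S then 1 else 0 := by
  simp [Finsupp.single_apply]

theorem exists_eq_sum_prod_sum_coord_of_range_eq [Fintype ι] {κ : Type*} [Fintype κ]
    (G : MultilinearMap R (fun _ : κ => W) R)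
    (hsym : ∀ m m' : κ → ι, Set.range m = Set.range m' →
      G (fun j => B (m j)) = G (fun j => B (m' j))) :
    ∃ c : Finset ι → R, ∀ w : κ → W, G w = ∑ S, c S * ∏ j, (∑ i ∈ S, B.coord i) (w j) := by
  classical
  let g : Finset ι → R := fun T =>
    if h : ∃ m : κ → ι, univ.image m = T then G (fun j => B (h.choose j)) else 0
  have hg : ∀ m : κ → ι, G (fun j => B (m j)) = g (univ.image m) := by
    intro m
    have h : ∃ m' : κ → ι, univ.image m' = univ.image m := ⟨m, rfl⟩
    simp only [g, dif_pos h]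
    refine hsym _ _ ?_
    simpa [Set.ext_iff, Finset.ext_iff] using h.choose_spec.symm
  obtain ⟨c, hc⟩ := IncidenceAlgebra.exists_sum_Ici_eq g
  refine ⟨c, fun w => ?_⟩
  let H : MultilinearMap R (fun _ : κ => W) R := ∑ S, c S •
    (MultilinearMap.mkPiAlgebra R κ R).compLinearMap (fun _ => ∑ i ∈ S, B.coord i)
  have hH : ∀ w, H w = ∑ S, c S * ∏ j, (∑ i ∈ S, B.coord i) (w j) := by
    intro w; simp [H]
  suffices G = H from (congrArg (· w) this).trans (hH w)
  refine Basis.ext_multilinear (fun _ => B) fun m => ?_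
  rw [hH, hg, ← hc]
  have hIci : Ici (univ.image m) = univ.filter fun S => ∀ j, m j ∈ S := by
    ext S; simp [subset_iff]
  simp only [sum_coord_apply_self, Fintype.prod_boole, mul_boole, hIci, sum_filter]

end Module.Basis

theorem ZMod.sum_mul_eq_sum_sigma {p : ℕ} [NeZero p] {A : Type*} [Fintype A]
    (c x : A → ZMod p) : ∑ a, c a * x a = ∑ b : Σ a, Fin (c a).val, x b.1 := by
  simp [Fintype.sum_sigma]

theorem exists_linearMap_fin_sum_prod_eq {R W A κ : Type*} [CommSemiring R] [AddCommMonoid W]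
    [Module R W] [Fintype A] [Fintype κ] [Nonempty κ] (l : A → W →ₗ[R] R) {N : ℕ}
    (hN : Fintype.card A ≤ N) :
    ∃ r : W →ₗ[R] Fin N → R, ∀ w : κ → W, ∑ a, ∏ j, l a (w j) = ∑ n, ∏ j, r (w j) n := by
  obtain ⟨e⟩ := Function.Embedding.nonempty_of_card_le (hN.trans_eq (Fintype.card_fin N).symm)
  refine ⟨LinearMap.pi (Function.extend e l 0), fun w => ?_⟩
  refine Fintype.sum_of_injective e e.injective _ _ (fun n hn => ?_) (fun a => ?_)
  · simp [Function.extend_apply' _ _ _ hn]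
  · simp [e.injective.extend_apply]

theorem stmt6_general (p : ℕ) (hp : p.Prime) (k : ℕ) (hk : 1 ≤ k)
    (W : Type) [AddCommGroup W] [Module (ZMod p) W]
    (G : MultilinearMap (ZMod p) (fun _ : Fin k => W) (ZMod p))
    (ι : Type) [Fintype ι] (B : Module.Basis ι (ZMod p) W)
    (hsym : ∀ m m' : Fin k → ι, Set.range m = Set.range m' →
      G (fun j => B (m j)) = G (fun j => B (m' j))) :
    ∃ N₀ : ℕ, ∀ N ≥ N₀, ∃ r : W →ₗ[ZMod p] (Fin N → ZMod p),
      ∀ w : Fin k → W, G w = ∑ n, ∏ j, r (w j) n := by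
  have : NeZero p := ⟨hp.ne_zero⟩
  have : Nonempty (Fin k) := ⟨⟨0, hk⟩⟩
  obtain ⟨c, hc⟩ := B.exists_eq_sum_prod_sum_coord_of_range_eq G hsym
  refine ⟨Fintype.card (Σ S, Fin (c S).val), fun N hN => ?_⟩
  obtain ⟨r, hr⟩ := exists_linearMap_fin_sum_prod_eq (κ := Fin k)
    (fun a : Σ S, Fin (c S).val => ∑ i ∈ a.1, B.coord i) hN
  exact ⟨r, fun w => by rw [hc, ZMod.sum_mul_eq_sum_sigma, hr]⟩

theorem stmt6 (p : ℕ) (hp : p.Prime) (k : ℕ) (hk : 1 ≤ k)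
    (W : Type) [AddCommGroup W] [Module (ZMod p) W] [Module.Finite (ZMod p) W]
    (G : MultilinearMap (ZMod p) (fun _ : Fin k => W) (ZMod p))
    (ι : Type) [Fintype ι] (B : Module.Basis ι (ZMod p) W)
    (hsym : ∀ m m' : Fin k → ι, Set.range m = Set.range m' →
      G (fun j => B (m j)) = G (fun j => B (m' j))) :
    ∃ N₀ : ℕ, ∀ N ≥ N₀, ∃ r : W →ₗ[ZMod p] (Fin N → ZMod p),
      ∀ w : Fin k → W, G w = ∑ n, ∏ j, r (w j) n :=
  stmt6_general p hp k hk W G ι B hsym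
end

section
/- Over Z_2, every symmetric bilinear form on a finite-dimensional Z_2-vector space W is a 'Gram form': there exist N and a linear map r : W → Z_2^N such that B(u,v) = Σ_i r(u)_i · r(v)_i for all u, v ∈ W. -/
/-!
Expanding `B` in a basis `e` and grouping the terms `(i, j)` and `(j, i)` gives
`B = ∑ᵢ B(eᵢ, eᵢ) • eᵢ* ⊗ eᵢ* + ∑_{i < j} B(eᵢ, eⱼ) • (eᵢ* ⊗ eⱼ* + eⱼ* ⊗ eᵢ*)`, where `f ⊗ g` is
the form `(u, v) ↦ f u * g v` (`f.smulRight g`). Gram forms are closed under sums (concatenate the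
maps `r`), `f ⊗ f` is Gram with `N = 1`, and in characteristic two
`f ⊗ g + g ⊗ f = (f + g) ⊗ (f + g) + f ⊗ f + g ⊗ g`. Over `ℤ/2` every scalar is idempotent, so
multiplying a Gram form by it keeps it Gram.
-/

open Finset

theorem Finset.sum_sum_eq_sum_diag_add_sum_lt {ι M : Type*} [Fintype ι] [LinearOrder ι]
    [AddCommMonoid M] (f : ι → ι → M) :
    ∑ i, ∑ j, f i j = ∑ i, f i i + ∑ i, ∑ j with i < j, (f i j + f j i) := by
  have split : ∀ i j, f i j =
      (if i = j then f i j else 0) + (if i < j then f i j else 0) +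
        (if j < i then f i j else 0) := by
    intro i j
    rcases lt_trichotomy i j with h | rfl | h
    · simp [h, h.ne, h.not_gt]
    · simp
    · simp [h, h.ne', h.not_gt]
  have swap : ∑ i, ∑ j, (if j < i then f i j else 0) = ∑ i, ∑ j, (if i < j then f j i else 0) :=
    Finset.sum_comm
  conv_lhs => rw [sum_congr rfl fun i _ => sum_congr rfl fun j _ => split i j]
  simp only [sum_add_distrib, swap, sum_ite_eq, mem_univ, if_true, sum_filter]
  exact add_assoc _ _ _

namespace LinearMap

variable {R W : Type*}

section CommSemiring

variable [CommSemiring R] [AddCommMonoid W] [Module R W]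

def IsGramForm (B : W →ₗ[R] W →ₗ[R] R) : Prop :=
  ∃ (N : ℕ) (r : W →ₗ[R] (Fin N → R)), ∀ u v, B u v = ∑ i, r u i * r v i

theorem isGramForm_zero : IsGramForm (0 : W →ₗ[R] W →ₗ[R] R) :=
  ⟨0, 0, fun _ _ => by simp⟩

theorem IsGramForm.add {B₁ B₂ : W →ₗ[R] W →ₗ[R] R} (h₁ : IsGramForm B₁) (h₂ : IsGramForm B₂) :
    IsGramForm (B₁ + B₂) := by
  obtain ⟨N₁, r₁, hr₁⟩ := h₁
  obtain ⟨N₂, r₂, hr₂⟩ := h₂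
  refine ⟨N₁ + N₂, pi (Fin.addCases (fun i => proj i ∘ₗ r₁) (fun j => proj j ∘ₗ r₂)),
    fun u v => ?_⟩
  simp [Fin.sum_univ_add, hr₁, hr₂]

theorem IsGramForm.sum {ι : Type*} {s : Finset ι} {B : ι → W →ₗ[R] W →ₗ[R] R}
    (h : ∀ i ∈ s, IsGramForm (B i)) : IsGramForm (∑ i ∈ s, B i) :=
  Finset.sum_induction B IsGramForm (fun _ _ => IsGramForm.add) isGramForm_zero h

theorem IsGramForm.smul {B : W →ₗ[R] W →ₗ[R] R} (hB : IsGramForm B) {c : R}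
    (hc : IsIdempotentElem c) : IsGramForm (c • B) := by
  obtain ⟨N, r, hr⟩ := hB
  refine ⟨N, c • r, fun u v => ?_⟩
  simp only [smul_apply, hr, smul_eq_mul, Pi.smul_apply, mul_sum]
  exact sum_congr rfl fun i _ => by rw [mul_mul_mul_comm, hc.eq]

theorem isGramForm_smulRight_self (f : W →ₗ[R] R) : IsGramForm (f.smulRight f) :=
  ⟨1, pi fun _ => f, fun u v => by simp⟩

end CommSemiring

theorem isGramForm_smulRight_add_smulRight [CommRing R] [CharP R 2] [AddCommMonoid W]
    [Module R W] (f g : W →ₗ[R] R) : IsGramForm (f.smulRight g + g.smulRight f) := by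
  have h : f.smulRight g + g.smulRight f =
      (f + g).smulRight (f + g) + f.smulRight f + g.smulRight g := by
    ext u v
    simp only [add_apply, smulRight_apply, smul_apply, smul_eq_mul]
    linear_combination (-(f u * f v) - g u * g v) * CharTwo.two_eq_zero (R := R)
  rw [h]
  exact ((isGramForm_smulRight_self _).add (isGramForm_smulRight_self _)).add
    (isGramForm_smulRight_self _)

section Basis

variable {ι : Type*} [CommSemiring R] [AddCommMonoid W] [Module R W] [Fintype ι]

theorem eq_sum_sum_smul_smulRight_coord (B : W →ₗ[R] W →ₗ[R] R) (b : Module.Basis ι R W) :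
    B = ∑ i, ∑ j, B (b i) (b j) • (b.coord i).smulRight (b.coord j) := by
  classical
  refine b.ext fun k => b.ext fun l => ?_
  simp [Finsupp.single_apply]

theorem eq_sum_smul_smulRight_coord_add_sum_lt [LinearOrder ι] (B : W →ₗ[R] W →ₗ[R] R)
    (hB : ∀ u v, B u v = B v u) (b : Module.Basis ι R W) :
    B = ∑ i, B (b i) (b i) • (b.coord i).smulRight (b.coord i) +
      ∑ i, ∑ j with i < j, B (b i) (b j) •
        ((b.coord i).smulRight (b.coord j) + (b.coord j).smulRight (b.coord i)) := by
  conv_lhs => rw [eq_sum_sum_smul_smulRight_coord B b, sum_sum_eq_sum_diag_add_sum_lt]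
  congr 1
  refine sum_congr rfl fun i _ => sum_congr rfl fun j _ => ?_
  rw [hB (b j), smul_add]

end Basis

end LinearMap

theorem stmt7 (W : Type) [AddCommGroup W] [Module (ZMod 2) W]
    [FiniteDimensional (ZMod 2) W]
    (B : W →ₗ[ZMod 2] W →ₗ[ZMod 2] ZMod 2) (hsym : ∀ u v, B u v = B v u) :
    ∃ (N : ℕ) (r : W →ₗ[ZMod 2] (Fin N → ZMod 2)),
      ∀ u v, B u v = ∑ i, r u i * r v i := by
  have idem (a : ZMod 2) : IsIdempotentElem a := (sq a).symm.trans (ZMod.pow_card a)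
  change LinearMap.IsGramForm B
  rw [LinearMap.eq_sum_smul_smulRight_coord_add_sum_lt B hsym (Module.finBasis (ZMod 2) W)]
  refine .add (.sum fun i _ => (LinearMap.isGramForm_smulRight_self _).smul (idem _))
    (.sum fun i _ => .sum fun j _ =>
      (LinearMap.isGramForm_smulRight_add_smulRight _ _).smul (idem _))
end

section
/- Let p > 2 be prime and suppose a₁,...,a_{p+2}, b₁,...,b_{p+2} ∈ Z_{p²} satisfy: Σᵢ aᵢ = 1, Σᵢ bᵢ = 1, and for all i ≠ j there exist cᵢⱼ, dᵢⱼ ∈ Z_{p²} with bᵢ + bⱼ = 2cᵢⱼ + dᵢⱼ, p·cᵢⱼ = 0, cᵢⱼ + dᵢⱼ = 1, and aᵢ + aⱼ = dᵢⱼ. Then a contradiction follows; i.e., no such elements exist. -/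
theorem stmt9 (p : ℕ) (hp : p.Prime) (hp2 : 2 < p)
    (a b : Fin (p + 2) → ZMod (p ^ 2))
    (ha : ∑ i, a i = 1) (hb : ∑ i, b i = 1)
    (h : ∀ i j : Fin (p + 2), i ≠ j → ∃ c d : ZMod (p ^ 2),
      b i + b j = 2 * c + d ∧ (p : ZMod (p ^ 2)) * c = 0 ∧ c + d = 1 ∧ a i + a j = d) :
    False := by
  have hplt : p < p ^ 2 := by nlinarith
  set s : Fin (p + 2) → ZMod (p ^ 2) := fun i => a i + b i with hs
  have key : ∀ i j : Fin (p + 2), i ≠ j → s i + s j = 2 := by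
    intro i j hij
    obtain ⟨c, d, h1, h2, h3, h4⟩ := h i j hij
    simp only [hs]
    linear_combination h1 + h4 + 2 * h3
  have h2ne : (2 : ZMod (p ^ 2)) ≠ 0 := by
    intro h0
    have : ((2 : ℕ) : ZMod (p ^ 2)) = 0 := by push_cast; exact h0
    rw [ZMod.natCast_eq_zero_iff] at this
    have := Nat.le_of_dvd (by norm_num) this
    nlinarith
  have e01 : s ⟨0, by omega⟩ + s ⟨1, by omega⟩ = 2 := key _ _ (by simp [Fin.ext_iff])
  have e02 : s ⟨0, by omega⟩ + s ⟨2, by omega⟩ = 2 := key _ _ (by simp [Fin.ext_iff])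
  have e12 : s ⟨1, by omega⟩ + s ⟨2, by omega⟩ = 2 := key _ _ (by simp [Fin.ext_iff])
  have h0 : s ⟨0, by omega⟩ = 1 := by
    have h2u : IsUnit (2 : ZMod (p ^ 2)) := by
      have : ((2 : ℕ) : ZMod (p ^ 2)) = 2 := by push_cast; ring
      rw [← this, ZMod.isUnit_iff_coprime]
      exact Nat.Coprime.pow_right _ ((Nat.coprime_primes Nat.prime_two hp).mpr (by omega))
    have h20 : 2 * s ⟨0, by omega⟩ = 2 * 1 := by linear_combination e01 + e02 - e12
    exact h2u.mul_left_cancel h20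
  have hall : ∀ i : Fin (p + 2), s i = 1 := by
    intro i
    by_cases hi : i = ⟨0, by omega⟩
    · rw [hi]; exact h0
    · have := key i ⟨0, by omega⟩ hi
      rw [h0] at this
      linear_combination this
  have hsum : ∑ i, s i = (p + 2 : ℕ) := by
    rw [Finset.sum_congr rfl (fun i _ => hall i)]
    simp [Finset.card_univ]
  have hsum2 : ∑ i, s i = 2 := by
    simp only [hs]
    rw [Finset.sum_add_distrib, ha, hb]
    norm_num
  rw [hsum2] at hsum
  have : ((p : ℕ) : ZMod (p ^ 2)) = 0 := by push_cast at hsum ⊢; linear_combination -hsum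
  rw [ZMod.natCast_eq_zero_iff] at this
  have := Nat.le_of_dvd (by omega) this
  omega
end
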